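/- arXiv:2003.00398 — 3 statements merged into one kernel-verified Lean document; each statement's English description precedes it below -/
import Mathlib

section
/- For λ ∈ (0,1) and s ∈ ℂ with 0 < Re(s) < 1/λ − 1, the degenerate gamma function satisfies the difference equation Γ_λ(s+1) = (s/(1 − λ(s+1))) · Γ_λ(s). -/
open MeasureTheory Complex

/-- The degenerate gamma function, defined as an integral. -/
noncomputable def degGamma (l : ℝ) (s : ℂ) : ℂ :=
  ∫ t in Set.Ioi (0 : ℝ), ((1 + l * t : ℝ) : ℂ) ^ (-(1 / l) : ℂ) * (t : ℂ) ^ (s - 1)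

/-!
`degGamma l` is the Mellin transform of `t ↦ (1 + l t) ^ (-1/l)`. Write `M c a` for the Mellin
transform of `(1 + l t) ^ c` at `a`. Integrating `t ^ a (1 + l t) ^ c` by parts gives
`a M c a = -c l M (c - 1) (a + 1)`, while `(1 + l t) ^ c = (1 + l t) ^ (c - 1) (1 + l t)` gives
`M c a = M (c - 1) a + l M (c - 1) (a + 1)`. For `c = 1 - 1/l` both identities only involve
`degGamma l a` and `degGamma l (a + 1)`, and eliminating `M c a` yields the difference equation.
-/

open Set Filter Topology Asymptotics

noncomputable def oneAddMulCpow (l : ℝ) (c : ℂ) (t : ℝ) : ℂ := ((1 + l * t : ℝ) : ℂ) ^ c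

section

variable {l : ℝ} {a c : ℂ}

theorem continuousOn_oneAddMulCpow (hl : 0 ≤ l) (c : ℂ) :
    ContinuousOn (oneAddMulCpow l c) (Ici 0) := by
  refine ContinuousOn.cpow_const (by fun_prop) fun t ht => ?_
  rw [ofReal_mem_slitPlane]
  have : 0 ≤ t := ht
  positivity

theorem hasDerivAt_oneAddMulCpow {t : ℝ} (ht : 0 < 1 + l * t) :
    HasDerivAt (oneAddMulCpow l c) (c * l * oneAddMulCpow l (c - 1) t) t := by
  have hbase : HasDerivAt (fun t : ℝ => ((1 + l * t : ℝ) : ℂ)) l t := by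
    simpa using ((hasDerivAt_id t).const_mul l).const_add 1 |>.ofReal_comp
  have := (hasStrictDerivAt_cpow_const (c := c) (ofReal_mem_slitPlane.2 ht)).hasDerivAt.comp t
    hbase
  rwa [show c * l * oneAddMulCpow l (c - 1) t = c * ((1 + l * t : ℝ) : ℂ) ^ (c - 1) * l by
    unfold oneAddMulCpow; ring]

theorem oneAddMulCpow_isBigO_rpow_atTop (hl : 0 < l) (hc : c.re ≤ 0) :
    oneAddMulCpow l c =O[atTop] (· ^ c.re) := by
  refine IsBigO.of_bound (l ^ c.re) ?_
  filter_upwards [eventually_gt_atTop 0] with t ht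
  rw [oneAddMulCpow, norm_cpow_eq_rpow_re_of_pos (by positivity), Real.norm_of_nonneg
    (by positivity), ← Real.mul_rpow hl.le ht.le]
  exact Real.rpow_le_rpow_of_nonpos (by positivity) (by linarith) hc

theorem mellinConvergent_oneAddMulCpow (hl : 0 < l) (ha : 0 < a.re) (hac : a.re + c.re < 0) :
    MellinConvergent (oneAddMulCpow l c) a := by
  refine mellinConvergent_of_isBigO_rpow (a := -c.re) (b := 0)
    ((continuousOn_oneAddMulCpow hl.le c).mono Ioi_subset_Ici_self |>.locallyIntegrableOn
      measurableSet_Ioi) ?_ (by linarith) ?_ ha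
  · simpa using oneAddMulCpow_isBigO_rpow_atTop hl (by linarith)
  · have : Tendsto (oneAddMulCpow l c) (𝓝[>] 0) (𝓝 (oneAddMulCpow l c 0)) :=
      (continuousOn_oneAddMulCpow hl.le c 0 self_mem_Ici).mono_left
        (nhdsWithin_mono _ Ioi_subset_Ici_self)
    simpa using this.isBigO_one ℝ

theorem tendsto_cpow_mul_oneAddMulCpow_nhdsGT_zero (hl : 0 ≤ l) (ha : 0 < a.re) :
    Tendsto (fun t : ℝ => (t : ℂ) ^ a * oneAddMulCpow l c t) (𝓝[>] 0) (𝓝 0) := by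
  have hu : Tendsto (fun t : ℝ => (t : ℂ) ^ a) (𝓝[>] 0) (𝓝 0) := by
    simpa [zero_cpow (ne_zero_of_re_pos ha)] using
      (continuousAt_ofReal_cpow_const 0 a (Or.inl ha)).tendsto.mono_left nhdsWithin_le_nhds
  have hv : Tendsto (oneAddMulCpow l c) (𝓝[>] 0) (𝓝 (oneAddMulCpow l c 0)) :=
    (continuousOn_oneAddMulCpow hl c 0 self_mem_Ici).mono_left
      (nhdsWithin_mono _ Ioi_subset_Ici_self)
  simpa using hu.mul hv

theorem tendsto_cpow_mul_oneAddMulCpow_atTop (hl : 0 < l) (hc : c.re ≤ 0)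
    (hac : a.re + c.re < 0) :
    Tendsto (fun t : ℝ => (t : ℂ) ^ a * oneAddMulCpow l c t) atTop (𝓝 0) := by
  have hu : (fun t : ℝ => (t : ℂ) ^ a) =O[atTop] (· ^ a.re) := by
    refine IsBigO.of_bound 1 ?_
    filter_upwards [eventually_gt_atTop 0] with t ht
    rw [norm_cpow_eq_rpow_re_of_pos ht, Real.norm_of_nonneg (by positivity), one_mul]
  refine (hu.mul (oneAddMulCpow_isBigO_rpow_atTop hl hc)).trans_tendsto ?_
  refine (tendsto_rpow_neg_atTop (y := -(a.re + c.re)) (by linarith)).congr' ?_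
  filter_upwards [eventually_gt_atTop 0] with t ht
  rw [neg_neg, Real.rpow_add ht]

theorem mul_mellin_oneAddMulCpow (hl : 0 < l) (ha : 0 < a.re) (hac : a.re + c.re < 0) :
    a * mellin (oneAddMulCpow l c) a = -(c * l) * mellin (oneAddMulCpow l (c - 1)) (a + 1) := by
  have hu : ∀ t ∈ Ioi (0 : ℝ), HasDerivAt (fun t : ℝ => (t : ℂ) ^ a) (a * (t : ℂ) ^ (a - 1)) t :=
    fun t ht => (hasStrictDerivAt_cpow_const (ofReal_mem_slitPlane.2 ht)).hasDerivAt.comp_ofReal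
  have hv : ∀ t ∈ Ioi (0 : ℝ), HasDerivAt (oneAddMulCpow l c)
      (c * l * oneAddMulCpow l (c - 1) t) t := fun t (ht : 0 < t) =>
    hasDerivAt_oneAddMulCpow (by positivity)
  have huv' : IntegrableOn ((fun t : ℝ => (t : ℂ) ^ a) * fun t => c * l * oneAddMulCpow l (c - 1) t)
      (Ioi 0) := by
    refine ((mellinConvergent_oneAddMulCpow (c := c - 1) (a := a + 1) hl
      (by simp only [add_re, one_re]; linarith) (by simp only [add_re, sub_re, one_re]; linarith)).const_smul (c * l)).congr_fun (fun t _ => ?_) measurableSet_Ioi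
    simp only [Pi.mul_apply, add_sub_cancel_right, smul_eq_mul]
  have hu'v : IntegrableOn ((fun t : ℝ => a * (t : ℂ) ^ (a - 1)) * oneAddMulCpow l c) (Ioi 0) := by
    refine ((mellinConvergent_oneAddMulCpow hl ha hac).const_smul a).congr_fun
      (fun t _ => ?_) measurableSet_Ioi
    simp only [Pi.mul_apply, smul_eq_mul]
    ring
  have hparts := integral_Ioi_mul_deriv_eq_deriv_mul hu hv huv' hu'v
    (tendsto_cpow_mul_oneAddMulCpow_nhdsGT_zero hl.le ha)
    (tendsto_cpow_mul_oneAddMulCpow_atTop hl (by linarith) hac)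
  have hlhs : ∫ t in Ioi (0 : ℝ), (t : ℂ) ^ a * (c * l * oneAddMulCpow l (c - 1) t) =
      c * l * mellin (oneAddMulCpow l (c - 1)) (a + 1) := by
    rw [mellin, ← integral_const_mul]
    simp only [add_sub_cancel_right, smul_eq_mul]
    congr 1 with t
    ring
  have hrhs : ∫ t in Ioi (0 : ℝ), a * (t : ℂ) ^ (a - 1) * oneAddMulCpow l c t =
      a * mellin (oneAddMulCpow l c) a := by
    rw [mellin, ← integral_const_mul]
    simp only [smul_eq_mul, mul_assoc]
  rw [hlhs, hrhs] at hparts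
  linear_combination hparts

theorem mellin_oneAddMulCpow_eq_add (hl : 0 < l) (ha : 0 < a.re) (hac : a.re + c.re < 0) :
    mellin (oneAddMulCpow l c) a =
      mellin (oneAddMulCpow l (c - 1)) a + l * mellin (oneAddMulCpow l (c - 1)) (a + 1) := by
  have h0 := mellinConvergent_oneAddMulCpow (c := c - 1) hl ha
    (by simp only [sub_re, one_re]; linarith)
  have h1 := mellinConvergent_oneAddMulCpow (c := c - 1) (a := a + 1) hl
    (by simp only [add_re, one_re]; linarith) (by simp only [add_re, sub_re, one_re]; linarith)
  rw [mellin, mellin, mellin, ← integral_const_mul, ← integral_add h0 (h1.const_mul _)]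
  refine setIntegral_congr_fun measurableSet_Ioi fun t (ht : 0 < t) => ?_
  have hsplit : oneAddMulCpow l c t = oneAddMulCpow l (c - 1) t * ((1 + l * t : ℝ) : ℂ) := by
    have hne : ((1 + l * t : ℝ) : ℂ) ≠ 0 := ofReal_ne_zero.2 (by positivity)
    rw [oneAddMulCpow, oneAddMulCpow, cpow_sub _ _ hne, cpow_one, div_mul_cancel₀ _ hne]
  have hpow : (t : ℂ) ^ (a + 1 - 1) = (t : ℂ) ^ (a - 1) * t := by
    rw [add_sub_right_comm, cpow_add _ _ (ofReal_ne_zero.2 ht.ne'), cpow_one]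
  simp only [smul_eq_mul, hsplit, hpow]
  push_cast
  ring

end

theorem degGamma_eq_mellin (l : ℝ) (s : ℂ) :
    degGamma l s = mellin (oneAddMulCpow l (-(1 / l))) s := by
  simp only [degGamma, mellin, oneAddMulCpow, smul_eq_mul, mul_comm]

theorem degGamma_difference_equation (l : ℝ) (hl : l ∈ Set.Ioo (0 : ℝ) 1)
    (s : ℂ) (hs : 0 < s.re) (hs' : s.re < 1 / l - 1) :
    degGamma l (s + 1) = s / (1 - l * (s + 1)) * degGamma l s := by
  obtain ⟨hl0, -⟩ := hl
  set c : ℂ := ((1 - 1 / l : ℝ) : ℂ) with hc_def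
  have hc : c - 1 = -(1 / l) := by rw [hc_def]; push_cast; ring
  have hcl : c * l = l - 1 := by
    rw [hc_def]; push_cast; field_simp [ofReal_ne_zero.2 hl0.ne']
  have hsc : s.re + c.re < 0 := by rw [ofReal_re]; linarith
  have hibp := mul_mellin_oneAddMulCpow hl0 hs hsc
  rw [mellin_oneAddMulCpow_eq_add hl0 hs hsc, hc, ← degGamma_eq_mellin,
    ← degGamma_eq_mellin] at hibp
  have hden : 1 - (l : ℂ) * (s + 1) ≠ 0 := by
    have hre : (1 - (l : ℂ) * (s + 1)).re = 1 - l * (s.re + 1) := by simp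
    have hlt : l * (s.re + 1) < 1 := by rw [mul_comm, ← lt_div_iff₀ hl0]; linarith
    exact fun h => by rw [h, zero_re] at hre; linarith
  rw [div_mul_eq_mul_div, eq_div_iff hden]
  linear_combination -hibp + degGamma l (s + 1) * hcl
end

section
/- For λ ∈ (0,1) and positive integers m, n with m+n+1 < 1/λ, the degenerate beta function satisfies B_λ(m,n) = ((1)_{m+n+1,λ} / ((1)_{m+1,λ} (1)_{n+1,λ})) · B(m,n). -/
/-!
With `c = 1/λ`, the integral `I_k(c) = ∫₀^∞ (1+λt)^{-c} t^k dt` satisfies `I_0(c) = 1/(λ(c-1))`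
and, integrating by parts, `I_{k+1}(c) = (k+1)/(λ(c-1)) · I_k(c-1)` as long as `k+2 < c`.
Hence `Γ_λ(k+1) = I_k(1/λ) = k! / ∏_{j=1}^{k+1} (1 - jλ) = k! / (1)_{k+2,λ}` whenever `k+1 < 1/λ`,
and the formula for `B_λ(m,n) = Γ_λ(m) Γ_λ(n) / Γ_λ(m+n)` follows by substitution.
-/

open MeasureTheory Complex

/-- Degenerate beta function. -/
noncomputable def degBeta (l : ℝ) (a b : ℂ) : ℂ :=
  degGamma l a * degGamma l b / degGamma l (a + b)

/-- The degenerate falling factorial `(1)_{n,λ}`. -/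
noncomputable def degPoch (l : ℝ) (n : ℕ) : ℂ :=
  ∏ j ∈ Finset.range n, (1 - (j : ℂ) * l)

open Set Filter Topology

section RealIntegral

variable {l : ℝ}

lemma one_add_mul_rpow_neg_mul_pow_le (hl : 0 < l) {x c : ℝ} (hx : 0 < x) (hc : 0 ≤ c) (k : ℕ) :
    (1 + l * x) ^ (-c) * x ^ k ≤ l ^ (-c) * x ^ ((k : ℝ) - c) := calc
  (1 + l * x) ^ (-c) * x ^ k ≤ (l * x) ^ (-c) * x ^ k := by
    gcongr ?_ * _
    exact Real.rpow_le_rpow_of_nonpos (by positivity) (by linarith) (by linarith)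
  _ = l ^ (-c) * x ^ ((k : ℝ) - c) := by
    rw [Real.mul_rpow hl.le hx.le, mul_assoc, ← Real.rpow_natCast, ← Real.rpow_add hx]
    ring_nf

lemma continuousOn_one_add_mul_rpow_neg_mul_pow (hl : 0 < l) (c : ℝ) (k : ℕ) :
    ContinuousOn (fun t : ℝ => (1 + l * t) ^ (-c) * t ^ k) (Ici 0) := by
  refine ContinuousOn.mul ?_ (continuous_pow k).continuousOn
  refine (continuous_const.add (continuous_const.mul continuous_id)).continuousOn.rpow_const ?_
  intro x (hx : 0 ≤ x)
  exact Or.inl (show 1 + l * x ≠ 0 by positivity)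

lemma integrableOn_one_add_mul_rpow_neg_mul_pow (hl : 0 < l) {c : ℝ} {k : ℕ}
    (hc : (k : ℝ) + 1 < c) :
    IntegrableOn (fun t : ℝ => (1 + l * t) ^ (-c) * t ^ k) (Ioi 0) := by
  have hcont := continuousOn_one_add_mul_rpow_neg_mul_pow hl c k
  rw [← Ioc_union_Ioi_eq_Ioi zero_le_one]
  refine IntegrableOn.union ?_ ?_
  · exact (hcont.mono Icc_subset_Ici_self).integrableOn_Icc.mono_set Ioc_subset_Icc_self
  · have hdom := (integrableOn_Ioi_rpow_of_lt (a := (k : ℝ) - c) (by linarith) one_pos).const_mul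
      (l ^ (-c))
    refine hdom.mono' ((hcont.mono (Ioi_subset_Ici zero_le_one)).aestronglyMeasurable
      measurableSet_Ioi) ?_
    filter_upwards [ae_restrict_mem measurableSet_Ioi] with x (hx : 1 < x)
    have hx0 : 0 < x := by linarith
    rw [Real.norm_of_nonneg (by positivity)]
    exact one_add_mul_rpow_neg_mul_pow_le hl hx0 (by linarith) k

lemma tendsto_one_add_mul_rpow_neg_mul_pow (hl : 0 < l) {c : ℝ} {k : ℕ} (hc : (k : ℝ) < c) :
    Tendsto (fun t : ℝ => (1 + l * t) ^ (-c) * t ^ k) atTop (𝓝 0) := by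
  have hlim : Tendsto (fun t : ℝ => l ^ (-c) * t ^ ((k : ℝ) - c)) atTop (𝓝 0) := by
    simpa [neg_sub] using (tendsto_rpow_neg_atTop (y := c - k) (by linarith)).const_mul (l ^ (-c))
  refine squeeze_zero' ?_ ?_ hlim
  · filter_upwards [eventually_ge_atTop 0] with x hx
    positivity
  · filter_upwards [eventually_gt_atTop 0] with x hx
    exact one_add_mul_rpow_neg_mul_pow_le hl hx (by linarith) k

lemma hasDerivAt_one_add_mul_rpow (c : ℝ) {x : ℝ} (hx : 0 < 1 + l * x) :
    HasDerivAt (fun t : ℝ => (1 + l * t) ^ c) (l * c * (1 + l * x) ^ (c - 1)) x := by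
  have hlin : HasDerivAt (fun t : ℝ => 1 + l * t) l x := by
    simpa using ((hasDerivAt_id x).const_mul l).const_add 1
  simpa using hlin.rpow_const (p := c) (Or.inl hx.ne')

lemma integral_one_add_mul_rpow_neg (hl : 0 < l) {c : ℝ} (hc : 1 < c) :
    ∫ t in Ioi 0, (1 + l * t) ^ (-c) = 1 / (l * (c - 1)) := by
  have hderiv : ∀ x ∈ Ici (0 : ℝ), HasDerivAt (fun t => -(1 + l * t) ^ (1 - c) / (l * (c - 1)))
      ((1 + l * x) ^ (-c)) x := by
    intro x (hx : 0 ≤ x)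
    refine ((hasDerivAt_one_add_mul_rpow (1 - c) (by positivity)).neg.div_const _).congr_deriv ?_
    rw [sub_sub_cancel_left]
    field_simp [show c - 1 ≠ 0 by linarith]
    ring
  have hint := integrableOn_one_add_mul_rpow_neg_mul_pow hl (c := c) (k := 0) (by simpa using hc)
  have hlim := (tendsto_one_add_mul_rpow_neg_mul_pow hl (c := c - 1) (k := 0)
    (by simpa using hc)).neg.div_const (l * (c - 1))
  simp only [pow_zero, mul_one, neg_sub, neg_zero, zero_div] at hint hlim
  rw [integral_Ioi_of_hasDerivAt_of_tendsto' hderiv hint (by simpa using hlim)]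
  simp only [Real.one_rpow, mul_zero, add_zero, sub_neg_eq_add, zero_add, neg_div]

lemma integral_one_add_mul_rpow_neg_mul_pow_succ (hl : 0 < l) {c : ℝ} {k : ℕ}
    (hc : (k : ℝ) + 2 < c) :
    ∫ t in Ioi 0, (1 + l * t) ^ (-c) * t ^ (k + 1) =
      (k + 1) / (l * (c - 1)) * ∫ t in Ioi 0, (1 + l * t) ^ (-(c - 1)) * t ^ k := by
  have hderiv : ∀ x ∈ Ici (0 : ℝ), HasDerivAt (fun t => (1 + l * t) ^ (-(c - 1)) * t ^ (k + 1))
      ((k + 1) * ((1 + l * x) ^ (-(c - 1)) * x ^ k) -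
        l * (c - 1) * ((1 + l * x) ^ (-c) * x ^ (k + 1))) x := by
    intro x (hx : 0 ≤ x)
    refine ((hasDerivAt_one_add_mul_rpow _ (by positivity)).mul
      (hasDerivAt_pow (k + 1) x)).congr_deriv ?_
    rw [show -(c - 1) - 1 = -c by ring]
    push_cast
    ring
  have hint_pred := integrableOn_one_add_mul_rpow_neg_mul_pow hl (c := c - 1) (k := k)
    (by linarith)
  have hint := integrableOn_one_add_mul_rpow_neg_mul_pow hl (c := c) (k := k + 1)
    (by push_cast; linarith)
  have hlim := tendsto_one_add_mul_rpow_neg_mul_pow hl (c := c - 1) (k := k + 1)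
    (by push_cast; linarith)
  have hFTC := integral_Ioi_of_hasDerivAt_of_tendsto' hderiv
    ((hint_pred.const_mul _).sub (hint.const_mul _)) hlim
  rw [integral_sub (hint_pred.const_mul _) (hint.const_mul _), integral_const_mul,
    integral_const_mul, mul_zero, zero_pow k.succ_ne_zero, mul_zero, sub_zero] at hFTC
  have hc1 : c - 1 ≠ 0 := by linarith
  field_simp
  linear_combination -hFTC

lemma integral_one_add_mul_rpow_neg_mul_pow (hl : 0 < l) (k : ℕ) {c : ℝ}
    (hc : (k : ℝ) + 1 < c) :
    ∫ t in Ioi 0, (1 + l * t) ^ (-c) * t ^ k =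
      k.factorial / ∏ j ∈ Finset.range (k + 1), l * (c - (j + 1)) := by
  induction k generalizing c with
  | zero => simpa using integral_one_add_mul_rpow_neg hl (by simpa using hc)
  | succ k ih =>
    push_cast at hc
    have hshift : ∏ j ∈ Finset.range (k + 1), l * (c - 1 - (j + 1)) =
        ∏ j ∈ Finset.range (k + 1), l * (c - ((j + 1 : ℕ) + 1)) :=
      Finset.prod_congr rfl fun j _ => by push_cast; ring
    have hpos : 0 < ∏ j ∈ Finset.range (k + 1), l * (c - 1 - (j + 1)) := by
      refine Finset.prod_pos fun j hj => mul_pos hl ?_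
      have : (j : ℝ) ≤ k := by exact_mod_cast Finset.mem_range_succ_iff.mp hj
      linarith
    rw [integral_one_add_mul_rpow_neg_mul_pow_succ hl (by linarith), ih (by linarith),
      Finset.prod_range_succ' _ (k + 1), ← hshift, Nat.factorial_succ, Nat.cast_zero, zero_add]
    have : c - 1 ≠ 0 := by linarith
    field_simp
    push_cast
    ring

end RealIntegral

lemma degGamma_natCast_add_one {l : ℝ} (hl : 0 ≤ l) (k : ℕ) :
    degGamma l (k + 1) = ((∫ t in Ioi 0, (1 + l * t) ^ (-(1 / l)) * t ^ k : ℝ) : ℂ) := by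
  rw [degGamma, ← integral_complex_ofReal]
  refine setIntegral_congr_fun measurableSet_Ioi fun t (ht : 0 < t) => ?_
  have hbase : 0 ≤ 1 + l * t := by positivity
  rw [add_sub_cancel_right, Complex.cpow_natCast, Complex.ofReal_mul,
    Complex.ofReal_cpow hbase, Complex.ofReal_pow]
  push_cast
  rfl

lemma degPoch_succ (l : ℝ) (k : ℕ) :
    degPoch l (k + 1) = ∏ j ∈ Finset.range k, (1 - ((j : ℂ) + 1) * l) := by
  simp [degPoch, Finset.prod_range_succ']

lemma degGamma_natCast {l : ℝ} (hl : 0 < l) {m : ℕ} (hm : 0 < m) (h : (m : ℝ) < 1 / l) :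
    degGamma l m = (m - 1).factorial / degPoch l (m + 1) := by
  obtain ⟨k, rfl⟩ := Nat.exists_eq_add_one_of_ne_zero hm.ne'
  push_cast at h ⊢
  rw [degGamma_natCast_add_one hl.le,
    integral_one_add_mul_rpow_neg_mul_pow hl k h, degPoch_succ]
  have hl' : (l : ℂ) ≠ 0 := by exact_mod_cast hl.ne'
  push_cast
  congr 1
  refine Finset.prod_congr rfl fun j _ => ?_
  field_simp

lemma degPoch_ne_zero {l : ℝ} (hl : 0 < l) {N : ℕ} (h : (N : ℝ) - 1 < 1 / l) :
    degPoch l N ≠ 0 := by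
  refine Finset.prod_ne_zero_iff.mpr fun j hj => ?_
  have hj : (j : ℝ) + 1 ≤ N := by exact_mod_cast Finset.mem_range.mp hj
  have hjl : (j : ℝ) * l < 1 := by
    rw [← lt_div_iff₀ hl]
    linarith
  exact_mod_cast (show (1 - j * l : ℝ) ≠ 0 by linarith)

theorem degBeta_nat (l : ℝ) (hl : l ∈ Set.Ioo (0 : ℝ) 1)
    (m n : ℕ) (hm : 0 < m) (hn : 0 < n) (hmn : (m : ℝ) + n + 1 < 1 / l) :
    degBeta l m n =
      degPoch l (m + n + 1) / (degPoch l (m + 1) * degPoch l (n + 1)) *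
        ((Nat.factorial (m - 1) : ℂ) * (Nat.factorial (n - 1) : ℂ) /
          (Nat.factorial (m + n - 1) : ℂ)) := by
  have hl0 := hl.1
  have hm1 : (1 : ℝ) ≤ m := by exact_mod_cast hm
  have hn1 : (1 : ℝ) ≤ n := by exact_mod_cast hn
  have hm_ne := degPoch_ne_zero hl0 (N := m + 1) (by push_cast; linarith)
  have hn_ne := degPoch_ne_zero hl0 (N := n + 1) (by push_cast; linarith)
  have hmn_ne := degPoch_ne_zero hl0 (N := m + n + 1) (by push_cast; linarith)
  rw [degBeta, ← Nat.cast_add, degGamma_natCast hl0 hm (by linarith),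
    degGamma_natCast hl0 hn (by linarith), degGamma_natCast hl0 (by omega) (by push_cast; linarith)]
  field_simp
end

section
/- For λ ∈ (0,1), the function s ↦ λ^{-s} Γ(s)Γ(1/λ−s)/Γ(1/λ) is analytic on ℂ minus the set {0,−1,−2,…} ∪ {1/λ, 1/λ+1, 1/λ+2,…}, and it agrees with Γ_λ(s) = ∫₀^∞ (1+λt)^{-1/λ} t^{s-1} dt on the strip 0 < Re(s) < 1/λ. -/
/-!
The substitution `u = λ t` turns the integral into `λ^{-s} ∫₀^∞ (1 + u)^{-1/λ} u^{s-1} du`, and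
`u = x / (1 - x)` turns that into the Beta integral `B(s, 1/λ - s) = Γ(s) Γ(1/λ - s) / Γ(1/λ)`.
Analyticity holds because `1/Γ` is entire and does not vanish away from the poles of `Γ`.
-/

open MeasureTheory Complex Set

theorem Complex.analyticAt_Gamma {s : ℂ} (hs : ∀ m : ℕ, s ≠ -m) : AnalyticAt ℂ Gamma s := by
  simpa only [Pi.inv_def, inv_inv] using
    (differentiable_one_div_Gamma.analyticAt s).inv (inv_ne_zero (Gamma_ne_zero hs))

theorem image_div_one_sub_Ioo : (fun x : ℝ => x / (1 - x)) '' Ioo 0 1 = Ioi 0 := by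
  ext u
  simp only [mem_image, mem_Ioi, mem_Ioo]
  constructor
  · rintro ⟨x, ⟨hx0, hx1⟩, rfl⟩
    exact div_pos hx0 (sub_pos.2 hx1)
  · intro hu
    have h1u : 0 < 1 + u := by linarith
    refine ⟨u / (1 + u), ⟨by positivity, (div_lt_one h1u).2 (by linarith)⟩, ?_⟩
    field_simp
    ring

theorem injOn_div_one_sub_Ioo : InjOn (fun x : ℝ => x / (1 - x)) (Ioo 0 1) := by
  intro x hx y hy h
  have hx1 : 1 - x ≠ 0 := (sub_pos.2 hx.2).ne'
  have hy1 : 1 - y ≠ 0 := (sub_pos.2 hy.2).ne'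
  field_simp at h
  linarith

theorem hasDerivAt_div_one_sub {x : ℝ} (hx : x ≠ 1) :
    HasDerivAt (fun x : ℝ => x / (1 - x)) ((1 - x) ^ 2)⁻¹ x := by
  refine ((hasDerivAt_id' x).div ((hasDerivAt_id' x).const_sub 1)
    (sub_ne_zero.2 hx.symm)).congr_deriv ?_
  ring

theorem inv_one_sub_sq_smul_one_add_cpow_mul_cpow (a s : ℂ) {x : ℝ} (hx : x ∈ Ioo 0 1) :
    ((1 - x) ^ 2)⁻¹ • (((1 + x / (1 - x) : ℝ) : ℂ) ^ (-a) * ((x / (1 - x) : ℝ) : ℂ) ^ (s - 1))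
      = (x : ℂ) ^ (s - 1) * (1 - (x : ℂ)) ^ (a - s - 1) := by
  have h1x : 0 < 1 - x := sub_pos.2 hx.2
  have hy : ((1 - x : ℝ) : ℂ) ≠ 0 := ofReal_ne_zero.2 h1x.ne'
  have hyarg : ((1 - x : ℝ) : ℂ).arg ≠ Real.pi := by
    rw [arg_ofReal_of_nonneg h1x.le]
    exact Real.pi_ne_zero.symm
  have hsum : 1 + x / (1 - x) = (1 - x)⁻¹ := by field_simp; ring
  rw [hsum, div_eq_mul_inv, ofReal_mul, mul_cpow_ofReal_nonneg hx.1.le (by positivity),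
    ofReal_inv, inv_cpow _ _ hyarg, inv_cpow _ _ hyarg, cpow_neg,
    show (1 : ℂ) - x = ((1 - x : ℝ) : ℂ) by push_cast; ring,
    show a - s - 1 = a + -(s - 1) + -((2 : ℕ) : ℂ) by push_cast; ring,
    cpow_add _ _ hy, cpow_add _ _ hy, cpow_neg, cpow_neg, inv_inv, cpow_natCast, real_smul]
  push_cast
  ring

theorem integral_Ioi_one_add_cpow_mul_cpow (a s : ℂ) :
    ∫ u in Ioi (0 : ℝ), ((1 + u : ℝ) : ℂ) ^ (-a) * (u : ℂ) ^ (s - 1) = betaIntegral s (a - s) := by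
  have hderiv : ∀ x ∈ Ioo (0 : ℝ) 1,
      HasDerivWithinAt (fun x : ℝ => x / (1 - x)) ((1 - x) ^ 2)⁻¹ (Ioo 0 1) x :=
    fun x hx => (hasDerivAt_div_one_sub hx.2.ne).hasDerivWithinAt
  rw [← image_div_one_sub_Ioo,
    integral_image_eq_integral_abs_deriv_smul measurableSet_Ioo hderiv injOn_div_one_sub_Ioo,
    betaIntegral, intervalIntegral.integral_of_le zero_le_one, integral_Ioc_eq_integral_Ioo]
  refine setIntegral_congr_fun measurableSet_Ioo fun x hx => ?_
  rw [abs_of_nonneg (by positivity)]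
  exact inv_one_sub_sq_smul_one_add_cpow_mul_cpow a s hx

theorem integral_Ioi_one_add_mul_cpow_mul_cpow (a s : ℂ) {l : ℝ} (hl : 0 < l) :
    ∫ t in Ioi (0 : ℝ), ((1 + l * t : ℝ) : ℂ) ^ (-a) * (t : ℂ) ^ (s - 1)
      = (l : ℂ) ^ (-s) * ∫ u in Ioi (0 : ℝ), ((1 + u : ℝ) : ℂ) ^ (-a) * (u : ℂ) ^ (s - 1) := by
  have hl' : (l : ℂ) ≠ 0 := ofReal_ne_zero.2 hl.ne'
  have hscale := integral_comp_mul_left_Ioi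
    (fun u : ℝ => ((1 + u : ℝ) : ℂ) ^ (-a) * (u : ℂ) ^ (s - 1)) 0 hl
  have hpow : ∀ t ∈ Ioi (0 : ℝ), ((1 + l * t : ℝ) : ℂ) ^ (-a) * ((l * t : ℝ) : ℂ) ^ (s - 1)
      = (l : ℂ) ^ (s - 1) * (((1 + l * t : ℝ) : ℂ) ^ (-a) * (t : ℂ) ^ (s - 1)) := fun t ht => by
    rw [ofReal_mul, mul_cpow_ofReal_nonneg hl.le (le_of_lt ht)]
    ring
  rw [setIntegral_congr_fun measurableSet_Ioi hpow, integral_const_mul, mul_zero, real_smul,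
    ofReal_inv] at hscale
  have hls : (l : ℂ) ^ (s - 1) * l = (l : ℂ) ^ s := by
    simpa using (cpow_add (s - 1) 1 hl').symm
  rw [(eq_inv_mul_iff_mul_eq₀ (cpow_ne_zero_iff.2 (Or.inl hl'))).2 hscale]
  rw [← mul_assoc, ← mul_inv, hls, cpow_neg]

theorem integral_Ioi_one_add_cpow_mul_cpow_eq_Gamma {a s : ℂ} (hs : 0 < s.re) (hsa : s.re < a.re) :
    ∫ u in Ioi (0 : ℝ), ((1 + u : ℝ) : ℂ) ^ (-a) * (u : ℂ) ^ (s - 1)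
      = Gamma s * Gamma (a - s) / Gamma a := by
  have ha : 0 < a.re := hs.trans hsa
  rw [integral_Ioi_one_add_cpow_mul_cpow, eq_div_iff (Gamma_ne_zero_of_re_pos ha),
    Gamma_mul_Gamma_eq_betaIntegral hs (by rwa [sub_re, sub_pos]), add_sub_cancel, mul_comm]

theorem degGamma_analytic_continuation (l : ℝ) (hl : l ∈ Set.Ioo (0 : ℝ) 1) :
    (∀ s : ℂ,
        s ∉ ({s : ℂ | ∃ n : ℕ, s = -(n : ℂ)} ∪ {s : ℂ | ∃ n : ℕ, s = (1 / l : ℂ) + n}) →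
        AnalyticAt ℂ
          (fun s : ℂ =>
            (l : ℂ) ^ (-s) * Complex.Gamma s * Complex.Gamma (1 / l - s) /
              Complex.Gamma (1 / l)) s) ∧
      ∀ s : ℂ, 0 < s.re → s.re < 1 / l →
        (l : ℂ) ^ (-s) * Complex.Gamma s * Complex.Gamma (1 / l - s) /
            Complex.Gamma (1 / l) =
          ∫ t in Set.Ioi (0 : ℝ),
            ((1 + l * t : ℝ) : ℂ) ^ (-(1 / l) : ℂ) * (t : ℂ) ^ (s - 1) := by
  have hl0 : 0 < l := hl.1
  have hre : (1 / (l : ℂ)).re = 1 / l := by norm_cast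
  refine ⟨fun s hs => ?_, fun s hs hsl => ?_⟩
  · simp only [mem_union, mem_ofPred_eq, not_or, not_exists] at hs
    have hGamma_sub : AnalyticAt ℂ (fun s => Gamma (1 / l - s)) s :=
      (analyticAt_Gamma fun m h => hs.2 m (by linear_combination -h)).comp
        (analyticAt_const.sub analyticAt_id)
    exact (((analyticAt_const.cpow analyticAt_id.neg (ofReal_mem_slitPlane.2 hl0)).mul
      (analyticAt_Gamma hs.1)).mul hGamma_sub).div analyticAt_const
      (Gamma_ne_zero_of_re_pos (by rw [hre]; positivity))
  · rw [integral_Ioi_one_add_mul_cpow_mul_cpow _ _ hl0,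
      integral_Ioi_one_add_cpow_mul_cpow_eq_Gamma hs (by rwa [hre])]
    ring
end
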